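/- Let F be a field with char F = 2 and more than two elements, and let · be a bilinear multiplication on F × F that is not identically zero, is endo-commutative ((x·x)·(y·y) = (x·y)·(x·y) for all x, y) and is curled (for every x there exists λ ∈ F with x·x = λ • x). Then (F × F, ·) is isomorphic to exactly one of the following algebras, given by their matrices of structure constants: ((α1, 0, 0, 0), (0, 1, 1+α1, 0)) for some α1 ∈ F; or ((1, 0, 0, 0), (0, 0, 1, 0)). Here 'exactly one' means in addition that no two distinct algebras of this list (in particular for distinct values of α1) are isomorphic to each other. -/

import Mathlib

/-!
In structure constants, curledness says that the binary cubic form `x₁ (x·x)₂ - x₂ (x·x)₁`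
vanishes; since `F` has more than two elements this forces `x·x = φ x • x` for the linear form
`φ x = a1 x₁ + b4 x₂`, leaving four free constants, on which endo-commutativity imposes the single
relation `K = a1 b4 - a1 a2 - b4 b2 = 0`. If `φ = 0` the product is `x·y = det (x, y) • v` for a
fixed `v ≠ 0`, which is `some 0` (characteristic 2 makes it commutative). Otherwise
`x·w = ψ x • w + K • x` for a second linear form `ψ`, where `w` spans `ker φ`; so when `K = 0`, a
vector `u` with `φ u = 1` satisfies `u·w = ψ u • w`, and the basis `(u, w)`, rescaled at `u` when
`ψ u ≠ 0`, puts the product in normal form. Conversely, an isomorphism transports `φ`, hence also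
the scalar by which any `u` with `φ u = 1` acts on `ker φ`; these two invariants separate the
members of the family.
-/

/-- The bilinear multiplication on `F × F` determined by the matrix of structure
constants `((a1, a2, a3, a4), (b1, b2, b3, b4))`. -/
def scMul {F : Type*} [Field F] (a1 a2 a3 a4 b1 b2 b3 b4 : F) (x y : F × F) : F × F :=
  (a1 * x.1 * y.1 + a2 * x.1 * y.2 + a3 * x.2 * y.1 + a4 * x.2 * y.2,
   b1 * x.1 * y.1 + b2 * x.1 * y.2 + b3 * x.2 * y.1 + b4 * x.2 * y.2)

/-- A multiplication `m` on `F × F` is endo-commutative if `(x·x)·(y·y) = (x·y)·(x·y)`. -/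
def IsEndoCommutative {F : Type*} [Field F] (m : F × F → F × F → F × F) : Prop :=
  ∀ x y : F × F, m (m x x) (m y y) = m (m x y) (m x y)

/-- A multiplication `m` on `F × F` is curled if every square `x·x` is a scalar
multiple of `x`. -/
def IsCurled {F : Type*} [Field F] (m : F × F → F × F → F × F) : Prop :=
  ∀ x : F × F, ∃ lam : F, m x x = lam • x

/-- `m` is bilinear (linear in each argument). -/
def IsBilinearMul {F : Type*} [Field F] (m : F × F → F × F → F × F) : Prop :=
  (∀ (a : F) (x x' y : F × F), m (a • x + x') y = a • m x y + m x' y) ∧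
  (∀ (a : F) (x y y' : F × F), m x (a • y + y') = a • m x y + m x y')

/-- Two multiplications on `F × F` are isomorphic if some `F`-linear
equivalence `g` of `F × F` satisfies `g (x·y) = g x ∘ g y`. -/
def AlgIso {F : Type*} [Field F] (m₁ m₂ : F × F → F × F → F × F) : Prop :=
  ∃ g : (F × F) ≃ₗ[F] F × F, ∀ x y, g (m₁ x y) = m₂ (g x) (g y)

/-- The list of endo-commutative curled algebras (char F = 2, F ≠ ℤ/2ℤ):
`some a1` is `A₃,₂(a1, 0, 1)` and `none` is `A₆,₂(1, 0)`. -/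
def ecCurledFamily2 {F : Type*} [Field F] : Option F → (F × F → F × F → F × F)
  | some a1 => scMul a1 0 0 0 0 1 (1 + a1) 0
  | none => scMul 1 0 0 0 0 0 1 0

section
variable {F : Type*} [Field F]

lemma AlgIso.symm {m₁ m₂ : F × F → F × F → F × F} (h : AlgIso m₁ m₂) : AlgIso m₂ m₁ := by
  obtain ⟨g, hg⟩ := h
  refine ⟨g.symm, fun x y => g.injective ?_⟩
  simp [hg]

lemma AlgIso.trans {m₁ m₂ m₃ : F × F → F × F → F × F} (h : AlgIso m₁ m₂) (h' : AlgIso m₂ m₃) :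
    AlgIso m₁ m₃ := by
  obtain ⟨g, hg⟩ := h
  obtain ⟨g', hg'⟩ := h'
  exact ⟨g.trans g', fun x y => by simp [hg, hg']⟩

lemma isBilinearMul_scMul (a1 a2 a3 a4 b1 b2 b3 b4 : F) :
    IsBilinearMul (scMul a1 a2 a3 a4 b1 b2 b3 b4) := by
  refine ⟨fun a x x' y => ?_, fun a x y y' => ?_⟩ <;>
    ext <;> simp only [scMul, Prod.fst_add, Prod.snd_add, Prod.smul_fst, Prod.smul_snd,
      smul_eq_mul] <;> ring

namespace IsBilinearMul

variable {m : F × F → F × F → F × F}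

def toLinearMap₂ (hm : IsBilinearMul m) : (F × F) →ₗ[F] (F × F) →ₗ[F] F × F :=
  have zero_left (y : F × F) : m 0 y = 0 := by simpa using hm.1 (-1) 0 0 y
  have zero_right (x : F × F) : m x 0 = 0 := by simpa using hm.2 (-1) x 0 0
  LinearMap.mk₂ F m (fun x x' y => by simpa using hm.1 1 x x' y)
    (fun a x y => by simpa [zero_left] using hm.1 a x 0 y)
    (fun x y y' => by simpa using hm.2 1 x y y')
    (fun a x y => by simpa [zero_right] using hm.2 a x y 0)

@[simp] lemma toLinearMap₂_apply (hm : IsBilinearMul m) (x y : F × F) :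
    hm.toLinearMap₂ x y = m x y := rfl

lemma exists_eq_scMul (hm : IsBilinearMul m) :
    ∃ a1 a2 a3 a4 b1 b2 b3 b4 : F, m = scMul a1 a2 a3 a4 b1 b2 b3 b4 := by
  refine ⟨(m (1, 0) (1, 0)).1, (m (1, 0) (0, 1)).1, (m (0, 1) (1, 0)).1, (m (0, 1) (0, 1)).1,
    (m (1, 0) (1, 0)).2, (m (1, 0) (0, 1)).2, (m (0, 1) (1, 0)).2, (m (0, 1) (0, 1)).2, ?_⟩
  have basis (z : F × F) : z = z.1 • ((1 : F), (0 : F)) + z.2 • ((0 : F), (1 : F)) := by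
    ext <;> simp
  funext x y
  conv_lhs => rw [← hm.toLinearMap₂_apply, basis x, basis y]
  simp only [map_add, map_smul, LinearMap.add_apply, LinearMap.smul_apply, toLinearMap₂_apply]
  ext <;> simp only [scMul, Prod.fst_add, Prod.snd_add, Prod.smul_fst, Prod.smul_snd,
    smul_eq_mul] <;> ring

end IsBilinearMul

def pairMap (u v : F × F) : (F × F) →ₗ[F] F × F :=
  (LinearMap.fst F F F).smulRight u + (LinearMap.snd F F F).smulRight v

@[simp] lemma pairMap_apply (u v x : F × F) : pairMap u v x = x.1 • u + x.2 • v := rfl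

lemma pairMap_injective {u v : F × F} (huv : u.1 * v.2 - u.2 * v.1 ≠ 0) :
    Function.Injective (pairMap u v) := by
  rw [← LinearMap.ker_eq_bot, LinearMap.ker_eq_bot']
  intro x hx
  rw [pairMap_apply, Prod.ext_iff] at hx
  simp only [Prod.fst_add, Prod.snd_add, Prod.smul_fst, Prod.smul_snd, smul_eq_mul,
    Prod.fst_zero, Prod.snd_zero] at hx
  have h1 : x.1 * (u.1 * v.2 - u.2 * v.1) = 0 := by linear_combination v.2 * hx.1 - v.1 * hx.2
  have h2 : x.2 * (u.1 * v.2 - u.2 * v.1) = 0 := by linear_combination u.1 * hx.2 - u.2 * hx.1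
  ext
  · exact (mul_eq_zero.mp h1).resolve_right huv
  · exact (mul_eq_zero.mp h2).resolve_right huv

lemma IsBilinearMul.algIso_scMul {m : F × F → F × F → F × F} (hm : IsBilinearMul m)
    {u v : F × F} (huv : u.1 * v.2 - u.2 * v.1 ≠ 0) {A1 A2 A3 A4 B1 B2 B3 B4 : F}
    (h11 : m u u = A1 • u + B1 • v) (h12 : m u v = A2 • u + B2 • v)
    (h21 : m v u = A3 • u + B3 • v) (h22 : m v v = A4 • u + B4 • v) :
    AlgIso (scMul A1 A2 A3 A4 B1 B2 B3 B4) m := by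
  refine ⟨LinearEquiv.ofInjectiveEndo _ (pairMap_injective huv), fun x y => ?_⟩
  simp only [LinearEquiv.coe_ofInjectiveEndo, pairMap_apply]
  rw [← hm.toLinearMap₂_apply]
  simp only [map_add, map_smul, LinearMap.add_apply, LinearMap.smul_apply,
    IsBilinearMul.toLinearMap₂_apply, h11, h12, h21, h22, scMul]
  module

lemma IsCurled.fst_mul_snd_self {m : F × F → F × F → F × F} (h : IsCurled m) (x : F × F) :
    x.1 * (m x x).2 = x.2 * (m x x).1 := by
  obtain ⟨l, hl⟩ := h x
  rw [hl, Prod.smul_fst, Prod.smul_snd, smul_eq_mul, smul_eq_mul]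
  ring

def curledMul (a1 a2 b2 b4 : F) : F × F → F × F → F × F :=
  scMul a1 a2 (b4 - a2) 0 0 b2 (a1 - b2) b4

-- `x₁ (x·x)₂ - x₂ (x·x)₁` is a binary cubic form; it vanishes at the four points
-- `(1 : 0), (0 : 1), (1 : 1), (1 : c)` of the projective line, hence identically.
lemma scMul_eq_curledMul {c : F} (hc0 : c ≠ 0) (hc1 : c ≠ 1) {a1 a2 a3 a4 b1 b2 b3 b4 : F}
    (h : IsCurled (scMul a1 a2 a3 a4 b1 b2 b3 b4)) :
    scMul a1 a2 a3 a4 b1 b2 b3 b4 = curledMul a1 a2 b2 b4 := by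
  have e1 := h.fst_mul_snd_self (1, 0)
  have e2 := h.fst_mul_snd_self (0, 1)
  have e3 := h.fst_mul_snd_self (1, 1)
  have e4 := h.fst_mul_snd_self (1, c)
  simp only [scMul, mul_one, mul_zero, one_mul, zero_mul, add_zero, zero_add] at e1 e2 e3 e4
  obtain rfl : b1 = 0 := e1
  obtain rfl : a4 = 0 := e2.symm
  have hS : (a2 + a3 - b4) * (c * (1 - c)) = 0 := by linear_combination e4 - c * e3
  obtain rfl : a3 = b4 - a2 := by
    linear_combination (mul_eq_zero.mp hS).resolve_right
      (mul_ne_zero hc0 (sub_ne_zero.mpr hc1.symm))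
  obtain rfl : b3 = a1 - b2 := by linear_combination e3
  rfl

lemma IsEndoCommutative.curledMul_det_eq_zero {a1 a2 b2 b4 : F}
    (h : IsEndoCommutative (curledMul a1 a2 b2 b4)) : a1 * b4 - a1 * a2 - b4 * b2 = 0 := by
  have q1 := h (1, 0) (0, 1)
  have q2 := h (0, 1) (1, 0)
  simp only [curledMul, scMul, Prod.ext_iff, mul_one, mul_zero, zero_mul, add_zero,
    zero_add] at q1 q2
  have hb2 : (a1 * b4 - a1 * a2 - b4 * b2) * b2 = 0 := by linear_combination q1.2
  have hb4 : (a1 * b4 - a1 * a2 - b4 * b2) * (b4 - a2) = 0 := by linear_combination -q2.1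
  exact pow_eq_zero_iff two_ne_zero |>.mp (by linear_combination a1 * hb4 - b4 * hb2)

lemma exists_mul_add_mul_eq_one {p q : F} (h : ¬(p = 0 ∧ q = 0)) :
    ∃ x : F × F, p * x.1 + q * x.2 = 1 := by
  by_cases hp : p = 0
  · exact ⟨(0, q⁻¹), by simp [hp, mul_inv_cancel₀ fun hq => h ⟨hp, hq⟩]⟩
  · exact ⟨(p⁻¹, 0), by simp [hp]⟩

section curledMul
variable {a1 a2 b2 b4 : F}

lemma isBilinearMul_curledMul : IsBilinearMul (curledMul a1 a2 b2 b4) :=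
  isBilinearMul_scMul ..

lemma curledMul_self (x : F × F) : curledMul a1 a2 b2 b4 x x = (a1 * x.1 + b4 * x.2) • x := by
  ext <;> simp only [curledMul, scMul, Prod.smul_fst, Prod.smul_snd, smul_eq_mul] <;> ring

lemma curledMul_add_curledMul_swap (x y : F × F) :
    curledMul a1 a2 b2 b4 x y + curledMul a1 a2 b2 b4 y x =
      (a1 * x.1 + b4 * x.2) • y + (a1 * y.1 + b4 * y.2) • x := by
  ext <;> simp only [curledMul, scMul, Prod.fst_add, Prod.snd_add, Prod.smul_fst,
    Prod.smul_snd, smul_eq_mul] <;> ring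

lemma curledMul_kernel (x : F × F) :
    curledMul a1 a2 b2 b4 x (b4, -a1) =
      (b2 * x.1 + (b4 - a2) * x.2) • (b4, -a1) + (a1 * b4 - a1 * a2 - b4 * b2) • x := by
  ext <;> simp only [curledMul, scMul, Prod.fst_add, Prod.snd_add, Prod.smul_fst,
    Prod.smul_snd, smul_eq_mul] <;> ring

lemma algIso_ecCurledFamily2_zero (h2 : (2 : F) = 0) (hne : ¬(a2 = 0 ∧ b2 = 0)) :
    AlgIso (ecCurledFamily2 (some 0)) (curledMul 0 a2 b2 0) := by
  obtain ⟨u, hu⟩ := exists_mul_add_mul_eq_one (p := b2) (q := -a2) (by simpa [and_comm] using hne)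
  refine isBilinearMul_curledMul.algIso_scMul (u := u) (v := (a2, b2)) ?_ ?_ ?_ ?_ ?_
  · rw [show u.1 * b2 - u.2 * a2 = 1 by linear_combination hu]
    exact one_ne_zero
  · ext <;> simp only [curledMul, scMul, Prod.fst_add, Prod.snd_add, Prod.smul_fst,
      Prod.smul_snd, smul_eq_mul] <;> ring
  · ext <;> simp only [curledMul, scMul, Prod.fst_add, Prod.snd_add, Prod.smul_fst,
      Prod.smul_snd, smul_eq_mul]
    · linear_combination a2 * hu
    · linear_combination b2 * hu
  · ext <;> simp only [curledMul, scMul, Prod.fst_add, Prod.snd_add, Prod.smul_fst,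
      Prod.smul_snd, smul_eq_mul]
    · linear_combination -a2 * hu - a2 * h2
    · linear_combination -b2 * hu - b2 * h2
  · ext <;> simp only [curledMul, scMul, Prod.fst_add, Prod.snd_add, Prod.smul_fst,
      Prod.smul_snd, smul_eq_mul] <;> ring

lemma exists_algIso_ecCurledFamily2_of_ne_zero (h2 : (2 : F) = 0)
    (hK : a1 * b4 - a1 * a2 - b4 * b2 = 0) (hφ : ¬(a1 = 0 ∧ b4 = 0)) :
    ∃ i, AlgIso (ecCurledFamily2 i) (curledMul a1 a2 b2 b4) := by
  set w : F × F := (b4, -a1)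
  have hφw : a1 * w.1 + b4 * w.2 = 0 := by simp only [w]; ring
  have hxw (x : F × F) : curledMul a1 a2 b2 b4 x w = (b2 * x.1 + (b4 - a2) * x.2) • w := by
    rw [curledMul_kernel, hK, zero_smul, add_zero]
  have hwx (x : F × F) : curledMul a1 a2 b2 b4 w x =
      (a1 * x.1 + b4 * x.2 - (b2 * x.1 + (b4 - a2) * x.2)) • w := by
    rw [sub_smul, ← hxw, eq_sub_iff_add_eq', curledMul_add_curledMul_swap, hφw, zero_smul,
      add_zero]
  have hww : curledMul a1 a2 b2 b4 w w = 0 := by rw [curledMul_self, hφw, zero_smul]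
  obtain ⟨u, hu⟩ := exists_mul_add_mul_eq_one hφ
  have hdet (s : F) (hs : s ≠ 0) : (s • u).1 * w.2 - (s • u).2 * w.1 ≠ 0 := by
    have : (s • u).1 * w.2 - (s • u).2 * w.1 = -s := by
      simp only [w, Prod.smul_fst, Prod.smul_snd, smul_eq_mul]
      linear_combination -s * hu
    rw [this]
    exact neg_ne_zero.mpr hs
  -- `u·w = t • w`; the basis `(u, w)` gives `none` when `t = 0`, and `(t⁻¹ • u, w)` gives
  -- `some t⁻¹` otherwise.
  set t := b2 * u.1 + (b4 - a2) * u.2 with ht_def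
  by_cases ht : t = 0
  · refine ⟨none, isBilinearMul_curledMul.algIso_scMul (u := u) (v := w)
      (by simpa using hdet 1 one_ne_zero) ?_ ?_ ?_ ?_⟩
    · rw [curledMul_self, hu]; module
    · rw [hxw, ← ht_def, ht]; module
    · rw [hwx, hu, ← ht_def, ht]; module
    · rw [hww]; module
  · have hφu : a1 * (t⁻¹ • u).1 + b4 * (t⁻¹ • u).2 = t⁻¹ := by
      simp only [Prod.smul_fst, Prod.smul_snd, smul_eq_mul]
      linear_combination t⁻¹ * hu
    have hψu : b2 * (t⁻¹ • u).1 + (b4 - a2) * (t⁻¹ • u).2 = 1 := by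
      simp only [Prod.smul_fst, Prod.smul_snd, smul_eq_mul]
      linear_combination inv_mul_cancel₀ ht - t⁻¹ * ht_def
    refine ⟨some t⁻¹, isBilinearMul_curledMul.algIso_scMul (u := t⁻¹ • u) (v := w)
      (hdet _ (inv_ne_zero ht)) ?_ ?_ ?_ ?_⟩
    · rw [curledMul_self, hφu]; module
    · rw [hxw, hψu]; module
    · rw [hwx, hφu, hψu, show t⁻¹ - 1 = 1 + t⁻¹ by linear_combination -h2]; module
    · rw [hww]; module

end curledMul

lemma exists_algIso_ecCurledFamily2 (h2 : (2 : F) = 0) {a1 a2 b2 b4 : F}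
    (hK : a1 * b4 - a1 * a2 - b4 * b2 = 0) (hne : ¬(a1 = 0 ∧ a2 = 0 ∧ b2 = 0 ∧ b4 = 0)) :
    ∃ i, AlgIso (ecCurledFamily2 i) (curledMul a1 a2 b2 b4) := by
  by_cases hφ : a1 = 0 ∧ b4 = 0
  · obtain ⟨rfl, rfl⟩ := hφ
    exact ⟨some 0, algIso_ecCurledFamily2_zero h2 (by tauto)⟩
  · exact exists_algIso_ecCurledFamily2_of_ne_zero h2 hK hφ

lemma AlgIso.apply_eq_of_mul_self {m₁ m₂ : F × F → F × F → F × F} {φ₁ φ₂ : F × F → F}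
    (h₁ : ∀ x, m₁ x x = φ₁ x • x) (h₂ : ∀ x, m₂ x x = φ₂ x • x) {g : (F × F) ≃ₗ[F] F × F}
    (hg : ∀ x y, g (m₁ x y) = m₂ (g x) (g y)) {x : F × F} (hx : x ≠ 0) : φ₂ (g x) = φ₁ x := by
  have := hg x x
  rw [h₁, h₂, map_smul] at this
  exact smul_left_injective F (g.map_ne_zero_iff.mpr hx) this.symm

-- Isomorphism invariants of `ecCurledFamily2 k`: `x·x = (sqCoeff k * x.1) • x`, and
-- `y ↦ u·y` acts on the line `y.1 = 0` as `kerCoeff k` whenever `sqCoeff k * u.1 = 1`.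
def sqCoeff : Option F → F
  | some a => a
  | none => 1

def kerCoeff : Option F → F
  | some a => a⁻¹
  | none => 0

lemma sqCoeff_eq_zero_iff {k : Option F} : sqCoeff k = 0 ↔ k = some 0 := by
  cases k <;> simp [sqCoeff]

lemma eq_of_kerCoeff_eq {i j : Option F} (hi : sqCoeff i ≠ 0) (hj : sqCoeff j ≠ 0)
    (h : kerCoeff i = kerCoeff j) : i = j := by
  cases i <;> cases j <;> simp_all [sqCoeff, kerCoeff]

lemma ecCurledFamily2_self (h2 : (2 : F) = 0) (k : Option F) (x : F × F) :
    ecCurledFamily2 k x x = (sqCoeff k * x.1) • x := by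
  cases k <;> ext <;> simp only [ecCurledFamily2, scMul, sqCoeff, Prod.smul_fst, Prod.smul_snd,
    smul_eq_mul]
  · ring
  · ring
  · ring
  · linear_combination x.1 * x.2 * h2

lemma ecCurledFamily2_of_fst_eq_zero {k : Option F} {x y : F × F}
    (hx : sqCoeff k * x.1 = 1) (hy : y.1 = 0) : ecCurledFamily2 k x y = kerCoeff k • y := by
  cases k with
  | none => ext <;> simp [ecCurledFamily2, scMul, kerCoeff, hy]
  | some a =>
    have hx : x.1 = a⁻¹ := eq_inv_of_mul_eq_one_right hx
    ext <;> simp [ecCurledFamily2, scMul, kerCoeff, hx, hy]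

lemma eq_of_algIso_ecCurledFamily2 (h2 : (2 : F) = 0) {i j : Option F}
    (h : AlgIso (ecCurledFamily2 i) (ecCurledFamily2 j)) : i = j := by
  obtain ⟨g, hg⟩ := h
  have hφ (x : F × F) : sqCoeff j * (g x).1 = sqCoeff i * x.1 := by
    rcases eq_or_ne x 0 with rfl | hx
    · simp
    · exact AlgIso.apply_eq_of_mul_self (φ₁ := fun x => sqCoeff i * x.1)
        (φ₂ := fun x => sqCoeff j * x.1) (ecCurledFamily2_self h2 i) (ecCurledFamily2_self h2 j)
        hg hx
  by_cases hi : sqCoeff i = 0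
  · have hj : sqCoeff j = 0 := by simpa [hi] using hφ (g.symm (1, 0))
    rw [sqCoeff_eq_zero_iff] at hi hj
    rw [hi, hj]
  have hj : sqCoeff j ≠ 0 := left_ne_zero_of_mul (b := (g (1, 0)).1) (by simpa [hφ] using hi)
  set u : F × F := ((sqCoeff i)⁻¹, 0)
  set v : F × F := (0, 1)
  have hgv : (g v).1 = 0 := by simpa [hj, v] using hφ v
  have hgv0 : g v ≠ 0 := g.map_ne_zero_iff.mpr (by simp [v])
  have := hg u v
  rw [ecCurledFamily2_of_fst_eq_zero (by simp [u, hi]) rfl, map_smul,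
    ecCurledFamily2_of_fst_eq_zero (by rw [hφ]; simp [u, hi]) hgv] at this
  exact eq_of_kerCoeff_eq hi hj (smul_left_injective F hgv0 this)

end

/-- over a field of characteristic 2 with more than two elements,
any nonzero bilinear endo-commutative curled multiplication on `F × F` is
isomorphic to exactly one member of `ecCurledFamily2`, and the members of
`ecCurledFamily2` are pairwise non-isomorphic. -/
theorem stmt_17 {F : Type*} [Field F] (h2 : ringChar F = 2)
    (hcard : ∃ c : F, c ≠ 0 ∧ c ≠ 1)
    (m : F × F → F × F → F × F) (hbil : IsBilinearMul m)
    (hnz : ¬ ∀ x y, m x y = 0)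
    (hec : ∀ x y : F × F, m (m x x) (m y y) = m (m x y) (m x y))
    (hcur : IsCurled m) :
    (∃! i : Option F, AlgIso m (ecCurledFamily2 i)) ∧
      ∀ i j : Option F, i ≠ j → ¬ AlgIso (ecCurledFamily2 i) (ecCurledFamily2 j) := by
  have h2' : (2 : F) = 0 := by exact_mod_cast (ringChar.spec F 2).mpr h2.dvd
  obtain ⟨c, hc0, hc1⟩ := hcard
  obtain ⟨a1, a2, a3, a4, b1, b2, b3, b4, rfl⟩ := hbil.exists_eq_scMul
  rw [scMul_eq_curledMul hc0 hc1 hcur] at hnz hec ⊢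
  have hne : ¬(a1 = 0 ∧ a2 = 0 ∧ b2 = 0 ∧ b4 = 0) := by
    rintro ⟨rfl, rfl, rfl, rfl⟩
    exact hnz fun x y => by simp [curledMul, scMul]
  have hK := IsEndoCommutative.curledMul_det_eq_zero hec
  obtain ⟨i, hi⟩ := exists_algIso_ecCurledFamily2 h2' hK hne
  exact ⟨⟨i, hi.symm, fun j hj => (eq_of_algIso_ecCurledFamily2 h2' (hi.trans hj)).symm⟩,
    fun i j hij h => hij (eq_of_algIso_ecCurledFamily2 h2' h)⟩
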